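/- Let X be a standard Borel space and n ∈ ℕ. The pair (M_n X, eq_n), where eq_n = (1/n!) Σ_{σ∈S_n} σ̇ ∘ ord, is an equaliser in the category Stoch of measurable spaces and Markov kernels of the family of all coordinate-permutation kernels σ̇ : X^n → X^n for σ ∈ S_n. -/

import Mathlib

open ProbabilityTheory MeasureTheory
open scoped ENNReal

/-- Scalar multiple of a kernel by a constant in `ℝ≥0∞`. -/
noncomputable def ksmul {α β : Type*} [MeasurableSpace α] [MeasurableSpace β]
    (c : ℝ≥0∞) (κ : Kernel α β) : Kernel α β :=
  ⟨fun a => c • κ a, Measure.measurable_of_measurable_coe _ (fun s hs => by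
    simpa [Measure.smul_apply, smul_eq_mul] using (κ.measurable_coe hs).const_mul c)⟩

/-- The quotient map `X^n → M_n X` sending a tuple to its underlying multiset of size `n`. -/
def coeqFun {X : Type*} (n : ℕ) : (Fin n → X) → Sym X n :=
  fun a => ⟨(List.ofFn a : Multiset X), by simp⟩

/-- `M_n X`, the space of size-`n` multisets over `X`, carries the quotient σ-algebra
induced by the map `coeqFun`. -/
noncomputable instance symMeasurableSpace {X : Type*} [MeasurableSpace X] (n : ℕ) :
    MeasurableSpace (Sym X n) :=
  MeasurableSpace.map (coeqFun n) inferInstance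

theorem coeqFun_measurable {X : Type*} [MeasurableSpace X] (n : ℕ) :
    Measurable (coeqFun (X := X) n) := fun _ h => h

/-- The deterministic kernel permuting the coordinates of a tuple according to `σ`. -/
noncomputable def permKernel {X : Type*} [MeasurableSpace X] {n : ℕ}
    (σ : Equiv.Perm (Fin n)) : Kernel (Fin n → X) (Fin n → X) :=
  Kernel.deterministic (fun a => a ∘ σ) (by fun_prop)

/-- The kernel `eq_n = (1/n!) Σ_{σ ∈ S_n} σ̇ ∘ ord : M_n X → X^n`. -/
noncomputable def eqKernel {X : Type*} [MeasurableSpace X] (n : ℕ)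
    (ord : Sym X n → (Fin n → X)) (hord : Measurable ord) :
    Kernel (Sym X n) (Fin n → X) :=
  ksmul ((n.factorial : ℝ≥0∞))⁻¹
    (∑ σ : Equiv.Perm (Fin n), permKernel σ ∘ₖ Kernel.deterministic ord hord)

/-!
A tuple and `ord` of its multiset differ by a permutation of coordinates, so averaging over
`S_n` makes them indistinguishable: `eq_n ∘ coeq_n` is the symmetriser `(1/n!) Σ_σ σ̇`, while
`coeq_n ∘ eq_n = id` because `coeq_n` forgets the order. Hence an `S_n`-invariant kernel `f`
satisfies `eq_n ∘ (coeq_n ∘ f) = f`, and any factorisation `eq_n ∘ g = f` forces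
`g = coeq_n ∘ eq_n ∘ g = coeq_n ∘ f`.
-/

section KernelArithmetic

variable {α β γ : Type*} [MeasurableSpace α] [MeasurableSpace β] [MeasurableSpace γ]

lemma ksmul_apply (c : ℝ≥0∞) (κ : Kernel α β) (a : α) : ksmul c κ a = c • κ a := rfl

lemma comp_ksmul (κ : Kernel β γ) (c : ℝ≥0∞) (η : Kernel α β) :
    κ ∘ₖ ksmul c η = ksmul c (κ ∘ₖ η) := by
  ext a s hs
  simp only [Kernel.comp_apply' _ _ _ hs, ksmul_apply, Measure.smul_apply, smul_eq_mul,
    lintegral_smul_measure]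

lemma ksmul_comp (κ : Kernel β γ) (c : ℝ≥0∞) (η : Kernel α β) :
    ksmul c κ ∘ₖ η = ksmul c (κ ∘ₖ η) := by
  ext a s hs
  simp only [Kernel.comp_apply' _ _ _ hs, ksmul_apply, Measure.smul_apply, smul_eq_mul]
  rw [lintegral_const_mul _ (κ.measurable_coe hs)]

lemma comp_finset_sum {ι : Type*} (κ : Kernel β γ) (I : Finset ι) (η : ι → Kernel α β) :
    κ ∘ₖ (∑ i ∈ I, η i) = ∑ i ∈ I, κ ∘ₖ η i := by
  ext a s hs
  simp only [Kernel.comp_apply' _ _ _ hs, sum_apply, Measure.finsetSum_apply,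
    lintegral_finsetSum_measure]

lemma finset_sum_comp {ι : Type*} (κ : ι → Kernel β γ) (I : Finset ι) (η : Kernel α β) :
    (∑ i ∈ I, κ i) ∘ₖ η = ∑ i ∈ I, κ i ∘ₖ η := by
  ext a s hs
  simp only [Kernel.comp_apply' _ _ _ hs, Kernel.finsetSum_apply']
  rw [lintegral_finsetSum _ (fun i _ => (κ i).measurable_coe hs)]

lemma ksmul_inv_card_sum_const {ι : Type*} [Fintype ι] [Nonempty ι] (κ : Kernel α β) :
    ksmul (Fintype.card ι : ℝ≥0∞)⁻¹ (∑ _i : ι, κ) = κ := by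
  ext a s hs
  rw [ksmul_apply, Measure.smul_apply, smul_eq_mul, Kernel.finsetSum_apply',
    Finset.sum_const, Finset.card_univ, nsmul_eq_mul, ← mul_assoc,
    ENNReal.inv_mul_cancel (by exact_mod_cast Fintype.card_ne_zero) (by simp), one_mul]

lemma ksmul_inv_factorial_sum_perm_const {n : ℕ} (κ : Kernel α β) :
    ksmul (n.factorial : ℝ≥0∞)⁻¹ (∑ _σ : Equiv.Perm (Fin n), κ) = κ := by
  have := ksmul_inv_card_sum_const (ι := Equiv.Perm (Fin n)) κ
  rwa [Fintype.card_perm, Fintype.card_fin] at this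

end KernelArithmetic

section Multisets

variable {X : Type*} {n : ℕ}

lemma coeqFun_comp_perm (σ : Equiv.Perm (Fin n)) (b : Fin n → X) :
    coeqFun n (b ∘ σ) = coeqFun n b :=
  Subtype.ext (Multiset.coe_eq_coe.2 (σ.ofFn_comp_perm b))

lemma exists_perm_of_coeqFun_eq {a b : Fin n → X}
    (h : coeqFun n a = coeqFun n b) : ∃ σ : Equiv.Perm (Fin n), b = a ∘ σ := by
  let : LinearOrder X := IsWellOrder.linearOrder WellOrderingRel
  have hperm : (List.ofFn a).Perm (List.ofFn b) := Multiset.coe_eq_coe.1 (congrArg Subtype.val h)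
  -- sort both tuples for an arbitrary linear order: equal multisets have equal sorted forms
  have hsorted : a ∘ Tuple.sort a = b ∘ Tuple.sort b :=
    List.ofFn_injective <| List.Perm.eq_of_sortedLE
      (Tuple.monotone_sort a).sortedLE_ofFn (Tuple.monotone_sort b).sortedLE_ofFn
      (((Tuple.sort a).ofFn_comp_perm a).trans (hperm.trans ((Tuple.sort b).ofFn_comp_perm b).symm))
  refine ⟨Tuple.sort a * (Tuple.sort b)⁻¹, funext fun i => ?_⟩
  simpa using (congrFun hsorted ((Tuple.sort b)⁻¹ i)).symm

end Multisets

section Equaliser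

variable {X : Type*} [MeasurableSpace X] {n : ℕ}

noncomputable def coeqKernel (X : Type*) [MeasurableSpace X] (n : ℕ) :
    Kernel (Fin n → X) (Sym X n) :=
  Kernel.deterministic (coeqFun n) (coeqFun_measurable n)

instance : IsMarkovKernel (coeqKernel X n) := by
  rw [coeqKernel]; infer_instance

lemma permKernel_comp_permKernel (σ τ : Equiv.Perm (Fin n)) :
    permKernel (X := X) σ ∘ₖ permKernel τ = permKernel (τ * σ) := by
  rw [permKernel, permKernel, Kernel.deterministic_comp_deterministic]
  rfl

lemma permKernel_comp_deterministic {α : Type*} [MeasurableSpace α] (σ : Equiv.Perm (Fin n))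
    {g : α → Fin n → X} (hg : Measurable g) :
    permKernel σ ∘ₖ Kernel.deterministic g hg
      = Kernel.deterministic (fun x => g x ∘ σ) (by fun_prop) := by
  rw [permKernel, Kernel.deterministic_comp_deterministic]
  rfl

lemma sum_permKernel_comp_deterministic_eq {α : Type*} [MeasurableSpace α]
    {g h : α → Fin n → X} (hg : Measurable g) (hh : Measurable h)
    (hgh : ∀ x, ∃ π : Equiv.Perm (Fin n), g x = h x ∘ π) :
    ∑ σ, permKernel σ ∘ₖ Kernel.deterministic g hg
      = ∑ σ, permKernel σ ∘ₖ Kernel.deterministic h hh := by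
  ext x s hs
  obtain ⟨π, hπ⟩ := hgh x
  simp only [Kernel.finsetSum_apply', permKernel_comp_deterministic,
    Kernel.deterministic_apply' _ _ hs, hπ]
  exact Fintype.sum_equiv (Equiv.mulLeft π) _ _ fun σ => rfl

variable (ord : Sym X n → (Fin n → X)) (hord : Measurable ord)

lemma permKernel_comp_eqKernel (σ : Equiv.Perm (Fin n)) :
    permKernel σ ∘ₖ eqKernel n ord hord = eqKernel n ord hord := by
  rw [eqKernel, comp_ksmul, comp_finset_sum]
  congr 1
  refine Fintype.sum_equiv (Equiv.mulRight σ) _ _ fun τ => ?_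
  rw [← Kernel.comp_assoc, permKernel_comp_permKernel]
  rfl

variable {ord}

lemma coeqKernel_comp_eqKernel (hsec : ∀ m : Sym X n, coeqFun n (ord m) = m) :
    coeqKernel X n ∘ₖ eqKernel n ord hord = Kernel.id := by
  have hsummand (σ : Equiv.Perm (Fin n)) :
      coeqKernel X n ∘ₖ (permKernel σ ∘ₖ Kernel.deterministic ord hord) = Kernel.id := by
    have hid : coeqFun n ∘ (fun m => ord m ∘ σ) = id :=
      funext fun m => (coeqFun_comp_perm σ (ord m)).trans (hsec m)
    rw [permKernel_comp_deterministic, coeqKernel, Kernel.deterministic_comp_deterministic]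
    simp only [hid]
    rfl
  rw [eqKernel, comp_ksmul, comp_finset_sum]
  simp only [hsummand]
  exact ksmul_inv_factorial_sum_perm_const _

lemma eqKernel_comp_coeqKernel (hsec : ∀ m : Sym X n, coeqFun n (ord m) = m) :
    eqKernel n ord hord ∘ₖ coeqKernel X n
      = ksmul (n.factorial : ℝ≥0∞)⁻¹ (∑ σ : Equiv.Perm (Fin n), permKernel σ) := by
  have hord_coeq (a : Fin n → X) : ∃ π : Equiv.Perm (Fin n), ord (coeqFun n a) = a ∘ π :=
    exists_perm_of_coeqFun_eq (hsec (coeqFun n a)).symm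
  rw [eqKernel, ksmul_comp, finset_sum_comp]
  simp only [Kernel.comp_assoc, coeqKernel, Kernel.deterministic_comp_deterministic]
  rw [sum_permKernel_comp_deterministic_eq (g := ord ∘ coeqFun n) _ measurable_id hord_coeq]
  exact congrArg _ (Finset.sum_congr rfl fun σ _ => Kernel.comp_id _)

end Equaliser

theorem stmt_6_general {X : Type*} [MeasurableSpace X] (n : ℕ)
    (ord : Sym X n → (Fin n → X)) (hord : Measurable ord)
    (hsec : ∀ m : Sym X n, coeqFun n (ord m) = m) :
    (∀ σ : Equiv.Perm (Fin n), permKernel σ ∘ₖ eqKernel n ord hord = eqKernel n ord hord) ∧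
    ∀ (A : Type) (_ : MeasurableSpace A) (f : Kernel A (Fin n → X)), IsMarkovKernel f →
      (∀ σ : Equiv.Perm (Fin n), permKernel σ ∘ₖ f = f) →
      ∃! g : Kernel A (Sym X n),
        IsMarkovKernel g ∧ eqKernel n ord hord ∘ₖ g = f := by
  refine ⟨permKernel_comp_eqKernel ord hord, fun A _ f _ hf => ?_⟩
  have hfactor : eqKernel n ord hord ∘ₖ (coeqKernel X n ∘ₖ f) = f := by
    rw [← Kernel.comp_assoc, eqKernel_comp_coeqKernel hord hsec, ksmul_comp, finset_sum_comp]
    simp only [hf]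
    exact ksmul_inv_factorial_sum_perm_const f
  refine ⟨coeqKernel X n ∘ₖ f, ⟨inferInstance, hfactor⟩, fun g ⟨_, hg⟩ => ?_⟩
  calc g = (coeqKernel X n ∘ₖ eqKernel n ord hord) ∘ₖ g := by
        rw [coeqKernel_comp_eqKernel hord hsec, Kernel.id_comp]
    _ = coeqKernel X n ∘ₖ f := by rw [Kernel.comp_assoc, hg]

/-- `(M_n X, eq_n)` is an equaliser in `Stoch` of the coordinate-permutation kernels
`σ̇ : X^n → X^n`, `σ ∈ S_n`: the Markov kernel `eq_n` equalises all `σ̇`, and every Markov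
kernel `f : A → X^n` equalising all `σ̇` factors uniquely through `eq_n` via a Markov
kernel. -/
theorem stmt_6 {X : Type*} [MeasurableSpace X] [StandardBorelSpace X] (n : ℕ)
    (ord : Sym X n → (Fin n → X)) (hord : Measurable ord)
    (hsec : ∀ m : Sym X n, coeqFun n (ord m) = m) :
    (∀ σ : Equiv.Perm (Fin n), permKernel σ ∘ₖ eqKernel n ord hord = eqKernel n ord hord) ∧
    ∀ (A : Type) (_ : MeasurableSpace A) (f : Kernel A (Fin n → X)), IsMarkovKernel f →
      (∀ σ : Equiv.Perm (Fin n), permKernel σ ∘ₖ f = f) →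
      ∃! g : Kernel A (Sym X n),
        IsMarkovKernel g ∧ eqKernel n ord hord ∘ₖ g = f :=
  stmt_6_general n ord hord hsec
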